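/- arXiv:1708.07309 — 2 statements merged into one kernel-verified Lean document; each statement's English description precedes it below -/
import Mathlib

section
/- (Lemma 4, optimal Q for fixed P in the multiterminal problem, with KL decomposition.) Fix β=(s₁,s₂,α) with s₁,s₂>0, α∈[0,1], ᾱ:=1−α, and let P be a test-channel pair. For every auxiliary tuple Q with strictly positive components, F_β(P,Q) − F_β(P) = α Σ_{u₁,u₂} p(u₁,u₂) D_KL(p(y₁ given (u₁,u₂)) ‖ q(y₁|u₁,u₂)) + ᾱ Σ_{u₁,u₂} p(u₁,u₂) D_KL(p(y₂ given (u₁,u₂)) ‖ q(y₂|u₁,u₂)) + s₁ D_KL(p(u₁,u₂) ‖ q(u₁,u₂)) + s₂ D_KL(p(u₂) ‖ q(u₂)) ≥ 0; consequently inf_Q F_β(P,Q) = F_β(P), attained at Q* given by the induced conditionals and marginals q*(y₁|u₁,u₂)=p(y₁|u₁,u₂), q*(y₂|u₁,u₂)=p(y₂|u₁,u₂) (whenever p(u₁,u₂)>0), q*(u₁,u₂)=p(u₁,u₂), q*(u₂)=p(u₂), and at no other Q agreeing with P's support in the sense that equality forces Q to coincide with Q* wherever the corresponding induced probabilities are positive.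 -/
open Finset Real

noncomputable section

/-- Shannon entropy of a finitely supported nonnegative vector,
with the convention `0 · log 0 = 0` (natural logarithm). -/
def ent {α : Type} [Fintype α] (p : α → ℝ) : ℝ := ∑ a, Real.negMulLog (p a)

/-- `p` is a probability mass function on the finite alphabet `α`. -/
def IsPmf {α : Type} [Fintype α] (p : α → ℝ) : Prop := (∀ a, 0 ≤ p a) ∧ ∑ a, p a = 1

/-- `w` is a conditional pmf (channel) from `α` to `β`. -/
def IsChan {α β : Type} [Fintype α] [Fintype β] (w : α → β → ℝ) : Prop := ∀ a, IsPmf (w a)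

/-- Kullback–Leibler divergence between two vectors on a finite alphabet
(convention `0 · log (0/q) = 0` is automatic since the coefficient vanishes). -/
def KL {α : Type} [Fintype α] (r q : α → ℝ) : ℝ := ∑ a, r a * Real.log (r a / q a)

/-- The extended-real value of a term `−a · log q`: it is `+∞` if `a > 0` and `q = 0`. -/
def nlogE (a q : ℝ) : EReal := if 0 < a ∧ q = 0 then ⊤ else ((-(a * Real.log q) : ℝ) : EReal)

variable {Y1 Y2 U1 U2 : Type} [Fintype Y1] [Fintype Y2] [Fintype U1] [Fintype U2]

/-- The joint pmf `p(y₁,y₂,u₁,u₂) = p(y₁,y₂)p(u₁|y₁)p(u₂|y₂)` induced by the source `pY`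
and a test-channel pair `(p1, p2)`. -/
def btJoint (pY : Y1 × Y2 → ℝ) (p1 : Y1 → U1 → ℝ) (p2 : Y2 → U2 → ℝ) :
    Y1 × Y2 × U1 × U2 → ℝ :=
  fun z => pY (z.1, z.2.1) * p1 z.1 z.2.2.1 * p2 z.2.1 z.2.2.2

/-- Marginal `p(y₁,u₁,u₂)`. -/
def bY1U (j : Y1 × Y2 × U1 × U2 → ℝ) : Y1 × U1 × U2 → ℝ :=
  fun z => ∑ y2, j (z.1, y2, z.2.1, z.2.2)

/-- Marginal `p(y₂,u₁,u₂)`. -/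
def bY2U (j : Y1 × Y2 × U1 × U2 → ℝ) : Y2 × U1 × U2 → ℝ :=
  fun z => ∑ y1, j (y1, z.1, z.2.1, z.2.2)

/-- Marginal `p(u₁,u₂)`. -/
def bU12 (j : Y1 × Y2 × U1 × U2 → ℝ) : U1 × U2 → ℝ :=
  fun u => ∑ y1, bY1U j (y1, u.1, u.2)

/-- Marginal `p(u₂)`. -/
def bU2 (j : Y1 × Y2 × U1 × U2 → ℝ) : U2 → ℝ := fun u2 => ∑ u1, bU12 j (u1, u2)

/-- Marginal `p(u₁)`. -/
def bU1 (j : Y1 × Y2 × U1 × U2 → ℝ) : U1 → ℝ := fun u1 => ∑ u2, bU12 j (u1, u2)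

/-- Marginal `p(y₁,u₂)`. -/
def bY1U2 (j : Y1 × Y2 × U1 × U2 → ℝ) : Y1 × U2 → ℝ :=
  fun z => ∑ u1, bY1U j (z.1, u1, z.2)

/-- Marginal `p(y₂,u₂)`. -/
def bY2U2 (j : Y1 × Y2 × U1 × U2 → ℝ) : Y2 × U2 → ℝ :=
  fun z => ∑ u1, bY2U j (z.1, u1, z.2)

/-- Marginal `p(y₂,u₁)`. -/
def bY2U1 (j : Y1 × Y2 × U1 × U2 → ℝ) : Y2 × U1 → ℝ :=
  fun z => ∑ u2, bY2U j (z.1, z.2, u2)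

/-- Marginal `p(y₁,u₁)`. -/
def bY1U1 (j : Y1 × Y2 × U1 × U2 → ℝ) : Y1 × U1 → ℝ :=
  fun z => ∑ u2, bY1U j (z.1, z.2, u2)

/-- Marginal `p(y₁)`. -/
def bY1 (j : Y1 × Y2 × U1 × U2 → ℝ) : Y1 → ℝ := fun y1 => ∑ u2, bY1U2 j (y1, u2)

/-- Marginal `p(y₂)`. -/
def bY2 (j : Y1 × Y2 × U1 × U2 → ℝ) : Y2 → ℝ := fun y2 => ∑ u2, bY2U2 j (y2, u2)

/-- Conditional entropy `H(Y₁|U₁,U₂)`. -/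
def bH1 (j : Y1 × Y2 × U1 × U2 → ℝ) : ℝ := ent (bY1U j) - ent (bU12 j)

/-- Conditional entropy `H(Y₂|U₁,U₂)`. -/
def bH2 (j : Y1 × Y2 × U1 × U2 → ℝ) : ℝ := ent (bY2U j) - ent (bU12 j)

/-- Conditional mutual information `I(Y₁;U₁|U₂)`. -/
def bI1c (j : Y1 × Y2 × U1 × U2 → ℝ) : ℝ :=
  ent (bY1U2 j) + ent (bU12 j) - ent (bU2 j) - ent (bY1U j)

/-- Mutual information `I(Y₂;U₂)`. -/
def bI2m (j : Y1 × Y2 × U1 × U2 → ℝ) : ℝ := ent (bY2 j) + ent (bU2 j) - ent (bY2U2 j)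

/-- Conditional mutual information `I(Y₂;U₂|U₁)`. -/
def bI2c (j : Y1 × Y2 × U1 × U2 → ℝ) : ℝ :=
  ent (bY2U1 j) + ent (bU12 j) - ent (bU1 j) - ent (bY2U j)

/-- Mutual information `I(Y₁;U₁)`. -/
def bI1m (j : Y1 × Y2 × U1 × U2 → ℝ) : ℝ := ent (bY1 j) + ent (bU1 j) - ent (bY1U1 j)

/-- The functional
`F_β(P) = α H(Y₁|U₁,U₂) + (1−α) H(Y₂|U₁,U₂) + s₁ I(Y₁;U₁|U₂) + s₂ I(Y₂;U₂)`. -/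
def Fb (s1 s2 a : ℝ) (j : Y1 × Y2 × U1 × U2 → ℝ) : ℝ :=
  a * bH1 j + (1 - a) * bH2 j + s1 * bI1c j + s2 * bI2m j

/-- `D¹_{BT,α}(R₁,R₂)`: the minimal `α H(Y₁|U₁,U₂) + (1−α) H(Y₂|U₁,U₂)` over test-channel
pairs into `V1`, `V2`, subject to `I(Y₁;U₁|U₂) ≤ R₁` and `I(Y₂;U₂) ≤ R₂`. -/
def Dbt1 (V1 V2 : Type) [Fintype V1] [Fintype V2]
    (pY : Y1 × Y2 → ℝ) (a R1 R2 : ℝ) : ℝ :=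
  sInf {d : ℝ | ∃ p1 : Y1 → V1 → ℝ, ∃ p2 : Y2 → V2 → ℝ, IsChan p1 ∧ IsChan p2 ∧
    bI1c (btJoint pY p1 p2) ≤ R1 ∧ bI2m (btJoint pY p1 p2) ≤ R2 ∧
    d = a * bH1 (btJoint pY p1 p2) + (1 - a) * bH2 (btJoint pY p1 p2)}

/-- `D²_{BT,α}(R₁,R₂)`: the minimal `α H(Y₁|U₁,U₂) + (1−α) H(Y₂|U₁,U₂)` subject to
`I(Y₂;U₂|U₁) ≤ R₂` and `I(Y₁;U₁) ≤ R₁`. -/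
def Dbt2 (V1 V2 : Type) [Fintype V1] [Fintype V2]
    (pY : Y1 × Y2 → ℝ) (a R1 R2 : ℝ) : ℝ :=
  sInf {d : ℝ | ∃ p1 : Y1 → V1 → ℝ, ∃ p2 : Y2 → V2 → ℝ, IsChan p1 ∧ IsChan p2 ∧
    bI2c (btJoint pY p1 p2) ≤ R2 ∧ bI1m (btJoint pY p1 p2) ≤ R1 ∧
    d = a * bH1 (btJoint pY p1 p2) + (1 - a) * bH2 (btJoint pY p1 p2)}

/-- Source marginal `p(y₁)`. -/
def bpY1 (pY : Y1 × Y2 → ℝ) : Y1 → ℝ := fun y1 => ∑ y2, pY (y1, y2)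

/-- Source marginal `p(y₂)`. -/
def bpY2 (pY : Y1 × Y2 → ℝ) : Y2 → ℝ := fun y2 => ∑ y1, pY (y1, y2)

/-- Induced marginal `p(u₂) = Σ_{y₂} p(y₂) p(u₂|y₂)`. -/
def bpU2m (pY : Y1 × Y2 → ℝ) (p2 : Y2 → U2 → ℝ) : U2 → ℝ :=
  fun u2 => ∑ y2, bpY2 pY y2 * p2 y2 u2

/-- Induced joint `p(u₁,u₂,y₁) = Σ_{y₂} p(y₁,y₂) p(u₁|y₁) p(u₂|y₂)`. -/
def bpUUY1 (pY : Y1 × Y2 → ℝ) (p1 : Y1 → U1 → ℝ) (p2 : Y2 → U2 → ℝ) :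
    U1 × U2 × Y1 → ℝ :=
  fun z => ∑ y2, pY (z.2.2, y2) * p1 z.2.2 z.1 * p2 y2 z.2.1

/-- Induced joint `p(u₁,u₂,y₂) = Σ_{y₁} p(y₁,y₂) p(u₁|y₁) p(u₂|y₂)`. -/
def bpUUY2 (pY : Y1 × Y2 → ℝ) (p1 : Y1 → U1 → ℝ) (p2 : Y2 → U2 → ℝ) :
    U1 × U2 × Y2 → ℝ :=
  fun z => ∑ y1, pY (y1, z.2.2) * p1 y1 z.1 * p2 z.2.2 z.2.1

/-- Induced marginal `p(u₁,u₂)`. -/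
def bpUU (pY : Y1 × Y2 → ℝ) (p1 : Y1 → U1 → ℝ) (p2 : Y2 → U2 → ℝ) : U1 × U2 → ℝ :=
  fun u => ∑ y1, bpUUY1 pY p1 p2 (u.1, u.2, y1)

/-- The multiterminal Blahut–Arimoto functional `F_β(P,Q)` (real-valued version;
the convention `0 · log 0 = 0` is automatic since vanishing coefficients kill terms). -/
def FbPQ (s1 s2 a : ℝ) (pY : Y1 × Y2 → ℝ) (p1 : Y1 → U1 → ℝ) (p2 : Y2 → U2 → ℝ)
    (qY1 : U1 × U2 → Y1 → ℝ) (qY2 : U1 × U2 → Y2 → ℝ)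
    (qUU : U1 × U2 → ℝ) (qU2 : U2 → ℝ) : ℝ :=
  s1 * (∑ u1, ∑ y1, p1 y1 u1 * bpY1 pY y1 * Real.log (p1 y1 u1))
  + s2 * (∑ u2, ∑ y2, p2 y2 u2 * bpY2 pY y2 * Real.log (p2 y2 u2))
  + s1 * (∑ u2, bpU2m pY p2 u2 * Real.log (bpU2m pY p2 u2))
  - s2 * (∑ u2, bpU2m pY p2 u2 * Real.log (qU2 u2))
  - a * (∑ u1, ∑ u2, ∑ y1, bpUUY1 pY p1 p2 (u1, u2, y1) * Real.log (qY1 (u1, u2) y1))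
  - (1 - a) * (∑ u1, ∑ u2, ∑ y2, bpUUY2 pY p1 p2 (u1, u2, y2) * Real.log (qY2 (u1, u2) y2))
  - s1 * (∑ u1, ∑ u2, bpUU pY p1 p2 (u1, u2) * Real.log (qUU (u1, u2)))

/-- The multiterminal Blahut–Arimoto functional `F_β(P,Q)`, with values in `ℝ ∪ {+∞}`
(a term `−a log q` with positive coefficient and `q = 0` is `+∞`). -/
def FbPQE (s1 s2 a : ℝ) (pY : Y1 × Y2 → ℝ) (p1 : Y1 → U1 → ℝ) (p2 : Y2 → U2 → ℝ)
    (qY1 : U1 × U2 → Y1 → ℝ) (qY2 : U1 × U2 → Y2 → ℝ)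
    (qUU : U1 × U2 → ℝ) (qU2 : U2 → ℝ) : EReal :=
  ((s1 * (∑ u1, ∑ y1, p1 y1 u1 * bpY1 pY y1 * Real.log (p1 y1 u1))
    + s2 * (∑ u2, ∑ y2, p2 y2 u2 * bpY2 pY y2 * Real.log (p2 y2 u2))
    + s1 * (∑ u2, bpU2m pY p2 u2 * Real.log (bpU2m pY p2 u2)) : ℝ) : EReal)
  + (∑ u2, nlogE (s2 * bpU2m pY p2 u2) (qU2 u2))
  + (∑ u1, ∑ u2, ∑ y1, nlogE (a * bpUUY1 pY p1 p2 (u1, u2, y1)) (qY1 (u1, u2) y1))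
  + (∑ u1, ∑ u2, ∑ y2, nlogE ((1 - a) * bpUUY2 pY p1 p2 (u1, u2, y2)) (qY2 (u1, u2) y2))
  + (∑ u1, ∑ u2, nlogE (s1 * bpUU pY p1 p2 (u1, u2)) (qUU (u1, u2)))

/-!
For fixed `P` the functional `F_β(P,Q)` is affine in the logarithms of the entries of `Q`.
At the tuple `Q*` of conditionals and marginals induced by `P`, the chain rule for entropy
identifies `F_β(P,Q*)` with `F_β(P)`; subtracting, `F_β(P,Q) − F_β(P)` is a nonnegative
combination of (conditional) Kullback–Leibler divergences between `P`'s laws and `Q`. Gibbs'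
inequality and its equality case then give the infimum and pin down the minimisers. In
`ℝ ∪ {+∞}`, a `Q` vanishing where its coefficient is positive has `F_β(P,Q) = +∞`, and every
other `Q` is handled by the real-valued decomposition.
-/

open InformationTheory

lemma mul_eq_mul_of_pos_imp {w x y : ℝ} (hw : 0 ≤ w) (h : 0 < w → x = y) : w * x = w * y := by
  rcases hw.eq_or_lt with rfl | hw
  · simp
  · rw [h hw]

lemma mul_nonneg_of_pos_imp {w x : ℝ} (hw : 0 ≤ w) (h : 0 < w → 0 ≤ x) : 0 ≤ w * x := by
  rcases hw.eq_or_lt with rfl | hw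
  · simp
  · exact mul_nonneg hw.le (h hw)

lemma pos_of_mul_pos_of_nonneg {w x : ℝ} (hx : 0 ≤ x) (h : 0 < w * x) : 0 < x :=
  hx.lt_of_ne (by rintro rfl; simp at h)

section KL

variable {α : Type} [Fintype α] {r q : α → ℝ}

lemma mul_log_div_eq_sub_add_mul_klFun {x y : ℝ} (hx : 0 ≤ x) (hxy : 0 < x → y ≠ 0) :
    x * log (x / y) = x - y + y * klFun (x / y) := by
  rcases hx.eq_or_lt with rfl | hx
  · simp [klFun]
  · have hy := hxy hx
    rw [klFun]
    field_simp
    ring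

lemma KL_eq_sum_sub_add_sum_mul_klFun (hr : ∀ a, 0 ≤ r a) (hsupp : ∀ a, 0 < r a → q a ≠ 0) :
    KL r q = (∑ a, r a - ∑ a, q a) + ∑ a, q a * klFun (r a / q a) := by
  rw [KL, ← Finset.sum_sub_distrib, ← Finset.sum_add_distrib]
  exact Finset.sum_congr rfl fun a _ => mul_log_div_eq_sub_add_mul_klFun (hr a) (hsupp a)

lemma KL_nonneg (hr : ∀ a, 0 ≤ r a) (hq : ∀ a, 0 ≤ q a) (hsum : ∑ a, q a ≤ ∑ a, r a)
    (hsupp : ∀ a, 0 < r a → q a ≠ 0) : 0 ≤ KL r q := by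
  rw [KL_eq_sum_sub_add_sum_mul_klFun hr hsupp]
  have := Finset.sum_nonneg fun a (_ : a ∈ univ) =>
    mul_nonneg (hq a) (klFun_nonneg (div_nonneg (hr a) (hq a)))
  linarith

lemma eq_of_KL_eq_zero (hr : ∀ a, 0 ≤ r a) (hq : ∀ a, 0 ≤ q a) (hsum : ∑ a, r a = ∑ a, q a)
    (hsupp : ∀ a, 0 < r a → q a ≠ 0) (h : KL r q = 0) {a : α} (ha : 0 < r a) : q a = r a := by
  rw [KL_eq_sum_sub_add_sum_mul_klFun hr hsupp, hsum, sub_self, zero_add,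
    Finset.sum_eq_zero_iff_of_nonneg fun a _ =>
      mul_nonneg (hq a) (klFun_nonneg (div_nonneg (hr a) (hq a)))] at h
  have hqa : q a ≠ 0 := hsupp a ha
  have := (mul_eq_zero.1 (h a (mem_univ a))).resolve_left hqa
  rw [klFun_eq_zero_iff (div_nonneg (hr a) (hq a)), div_eq_one_iff_eq hqa] at this
  exact this.symm

lemma KL_self (r : α → ℝ) : KL r r = 0 := by
  refine Finset.sum_eq_zero fun a _ => ?_
  rcases eq_or_ne (r a) 0 with h | h <;> simp [h]

lemma KL_eq_sub (hr : ∀ a, 0 ≤ r a) (hsupp : ∀ a, 0 < r a → q a ≠ 0) :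
    KL r q = ∑ a, r a * log (r a) - ∑ a, r a * log (q a) := by
  rw [KL, ← Finset.sum_sub_distrib]
  refine Finset.sum_congr rfl fun a _ => ?_
  rcases (hr a).eq_or_lt with h | h
  · simp [← h]
  · rw [log_div h.ne' (hsupp a h)]; ring

end KL

section CondKL

variable {U C : Type} [Fintype C] {m : U → ℝ} {F q : U → C → ℝ}

/-- `∑_u m(u) D(F(u,·)/m(u) ‖ q(·|u))` for joint weights `F` with marginal `m`; a row with
`m u = 0` contributes `0` whatever the junk value of the division. -/
def condKL [Fintype U] (m : U → ℝ) (F : U → C → ℝ) (q : U → C → ℝ) : ℝ :=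
  ∑ u, m u * KL (fun c => F u c / m u) (q u)

lemma marginal_nonneg (hF : ∀ u c, 0 ≤ F u c) (hm : ∀ u, ∑ c, F u c = m u) (u : U) :
    0 ≤ m u :=
  hm u ▸ Finset.sum_nonneg fun c _ => hF u c

lemma marginal_pos_of_pos (hF : ∀ u c, 0 ≤ F u c) (hm : ∀ u, ∑ c, F u c = m u) {u : U} {c : C}
    (h : 0 < F u c) : 0 < m u :=
  hm u ▸ h.trans_le (Finset.single_le_sum (fun c _ => hF u c) (mem_univ c))

lemma sum_div_marginal (hm : ∀ u, ∑ c, F u c = m u) {u : U} (hu : 0 < m u) :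
    ∑ c, F u c / m u = 1 := by
  rw [← Finset.sum_div, hm, div_self hu.ne']

lemma mul_KL_div_eq (hF : ∀ u c, 0 ≤ F u c) (hm : ∀ u, ∑ c, F u c = m u)
    (hsupp : ∀ u c, 0 < F u c → q u c ≠ 0) (u : U) :
    m u * KL (fun c => F u c / m u) (q u)
      = ∑ c, F u c * log (F u c / m u) - ∑ c, F u c * log (q u c) := by
  rcases (marginal_nonneg hF hm u).eq_or_lt with hu | hu
  · have hF0 : ∀ c, F u c = 0 := fun c =>
      (Finset.sum_eq_zero_iff_of_nonneg fun c _ => hF u c).1 (hm u ▸ hu.symm) c (mem_univ c)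
    simp [← hu, hF0]
  have hsupp' : ∀ c, 0 < F u c / m u → q u c ≠ 0 := fun c h =>
    hsupp u c ((div_pos_iff_of_pos_right hu).1 h)
  rw [KL_eq_sub (fun c => div_nonneg (hF u c) hu.le) hsupp', mul_sub, Finset.mul_sum,
    Finset.mul_sum]
  congr 1 <;> refine Finset.sum_congr rfl fun c _ => ?_ <;> field_simp

lemma condKL_eq_sub [Fintype U] (hF : ∀ u c, 0 ≤ F u c) (hm : ∀ u, ∑ c, F u c = m u)
    (hsupp : ∀ u c, 0 < F u c → q u c ≠ 0) :
    condKL m F q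
      = ∑ u, ∑ c, F u c * log (F u c / m u) - ∑ u, ∑ c, F u c * log (q u c) := by
  rw [condKL, ← Finset.sum_sub_distrib]
  exact Finset.sum_congr rfl fun u _ => mul_KL_div_eq hF hm hsupp u

lemma mul_KL_div_nonneg [Fintype U] (hF : ∀ u c, 0 ≤ F u c) (hm : ∀ u, ∑ c, F u c = m u)
    (hq : IsChan q) (hsupp : ∀ u c, 0 < F u c → q u c ≠ 0) (u : U) :
    0 ≤ m u * KL (fun c => F u c / m u) (q u) := by
  rcases (marginal_nonneg hF hm u).eq_or_lt with hu | hu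
  · simp [← hu]
  refine mul_nonneg hu.le (KL_nonneg (fun c => div_nonneg (hF u c) hu.le) (hq u).1 ?_ ?_)
  · rw [(hq u).2, sum_div_marginal hm hu]
  · exact fun c h => hsupp u c ((div_pos_iff_of_pos_right hu).1 h)

lemma condKL_nonneg [Fintype U] (hF : ∀ u c, 0 ≤ F u c) (hm : ∀ u, ∑ c, F u c = m u)
    (hq : IsChan q) (hsupp : ∀ u c, 0 < F u c → q u c ≠ 0) : 0 ≤ condKL m F q :=
  Finset.sum_nonneg fun u _ => mul_KL_div_nonneg hF hm hq hsupp u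

lemma eq_div_of_condKL_eq_zero [Fintype U] (hF : ∀ u c, 0 ≤ F u c)
    (hm : ∀ u, ∑ c, F u c = m u) (hq : IsChan q) (hsupp : ∀ u c, 0 < F u c → q u c ≠ 0)
    (h : condKL m F q = 0) {u : U} {c : C} (hc : 0 < F u c) : q u c = F u c / m u := by
  have hu := marginal_pos_of_pos hF hm hc
  have hterm := (Finset.sum_eq_zero_iff_of_nonneg fun u _ =>
    mul_KL_div_nonneg hF hm hq hsupp u).1 h u (mem_univ u)
  refine eq_of_KL_eq_zero (fun c => div_nonneg (hF u c) hu.le) (hq u).1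
    (by rw [(hq u).2, sum_div_marginal hm hu]) (fun c h => hsupp u c ?_)
    ((mul_eq_zero.1 hterm).resolve_left hu.ne') (div_pos hc hu)
  exact (div_pos_iff_of_pos_right hu).1 h

lemma condKL_eq_zero_of_eq_div [Fintype U] (hF : ∀ u c, 0 ≤ F u c)
    (hm : ∀ u, ∑ c, F u c = m u) (h : ∀ u, 0 < m u → ∀ c, q u c = F u c / m u) :
    condKL m F q = 0 := by
  refine Finset.sum_eq_zero fun u _ => ?_
  rcases (marginal_nonneg hF hm u).eq_or_lt with hu | hu
  · simp [← hu]
  · rw [show q u = fun c => F u c / m u from funext (h u hu), KL_self, mul_zero]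

lemma isChan_ite_div [Fintype U] (hF : ∀ u c, 0 ≤ F u c) (hm : ∀ u, ∑ c, F u c = m u)
    {g : C → ℝ} (hg : IsPmf g) : IsChan fun u c => if 0 < m u then F u c / m u else g c := by
  intro u
  dsimp only
  split_ifs with hu
  · exact ⟨fun c => div_nonneg (hF u c) hu.le, sum_div_marginal hm hu⟩
  · exact hg

end CondKL

lemma sum_mul_log_eq_neg_ent {α : Type} [Fintype α] (f : α → ℝ) :
    ∑ a, f a * log (f a) = -ent f := by
  simp [ent, negMulLog, Finset.sum_neg_distrib]

lemma sum_mul_log_div_eq {C : Type} [Fintype C] {f : C → ℝ} {m : ℝ} (hf : ∀ c, 0 ≤ f c)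
    (hm : ∑ c, f c = m) : ∑ c, f c * log (f c / m) = negMulLog m - ∑ c, negMulLog (f c) := by
  rcases (hm ▸ Finset.sum_nonneg fun c _ => hf c : 0 ≤ m).eq_or_lt with h0 | h0
  · have hf0 : ∀ c, f c = 0 := fun c =>
      (Finset.sum_eq_zero_iff_of_nonneg fun c _ => hf c).1 (hm.trans h0.symm) c (mem_univ c)
    simp [← h0, hf0]
  have hlog : ∀ c, f c * log (f c / m) = -negMulLog (f c) - f c * log m := fun c => by
    rcases (hf c).eq_or_lt with hc | hc
    · simp [← hc]
    · rw [log_div hc.ne' h0.ne', negMulLog]; ring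
  rw [Finset.sum_congr rfl fun c _ => hlog c, Finset.sum_sub_distrib, ← Finset.sum_mul, hm,
    Finset.sum_neg_distrib, negMulLog]
  ring

/-- The chain rule `H(A,B) = H(A) + H(B|A)` for the joint law `μ(a) w(b|a)`. -/
lemma sum_negMulLog_mul {A B : Type} [Fintype A] [Fintype B] {w : A → B → ℝ}
    (hw : ∀ a, ∑ b, w a b = 1) (μ : A → ℝ) :
    ∑ a, ∑ b, negMulLog (μ a * w a b)
      = ∑ a, negMulLog (μ a) + ∑ a, μ a * ∑ b, negMulLog (w a b) := by
  simp only [negMulLog_mul, Finset.sum_add_distrib, ← Finset.sum_mul, ← Finset.mul_sum, hw,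
    one_mul]

lemma sum_chan_mul {A B : Type} [Fintype A] [Fintype B] {w : A → B → ℝ} (hw : IsChan w) (a : A)
    (x y : ℝ) : ∑ b, x * w a b * y = x * y := by
  rw [← Finset.sum_mul, ← Finset.mul_sum, (hw a).2, mul_one]

lemma coe_add_ite_coe_top (q : Prop) [Decidable q] (x y : ℝ) :
    (x : EReal) + (if q then (y : EReal) else ⊤) = if q then ((x + y : ℝ) : EReal) else ⊤ := by
  split_ifs <;> simp [EReal.coe_add]

lemma ite_coe_top_add (p q : Prop) [Decidable p] [Decidable q] (x y : ℝ) :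
    ((if p then (x : EReal) else ⊤) + if q then (y : EReal) else ⊤)
      = if p ∧ q then ((x + y : ℝ) : EReal) else ⊤ := by
  split_ifs <;> simp_all [EReal.coe_add]

lemma sum_ite_coe_top {ι : Type} [Fintype ι] (p : ι → Prop) [DecidablePred p] (x : ι → ℝ) :
    ∑ i, (if p i then (x i : EReal) else ⊤)
      = if ∀ i, p i then ((∑ i, x i : ℝ) : EReal) else ⊤ := by
  classical
  suffices ∀ s : Finset ι, ∑ i ∈ s, (if p i then (x i : EReal) else ⊤)
      = if ∀ i ∈ s, p i then ((∑ i ∈ s, x i : ℝ) : EReal) else ⊤ by simpa using this univ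
  intro s
  induction s using Finset.induction_on with
  | empty => simp
  | insert i s hi ih =>
    rw [Finset.sum_insert hi, ih, ite_coe_top_add, Finset.sum_insert hi]
    simp only [Finset.forall_mem_insert]

open Classical in
lemma nlogE_eq_ite (a q : ℝ) :
    nlogE a q = if 0 < a → q ≠ 0 then ((-(a * log q) : ℝ) : EReal) else ⊤ := by
  by_cases h : 0 < a ∧ q = 0 <;> simp_all [nlogE]

section InducedLaws

variable {pY : Y1 × Y2 → ℝ} {p1 : Y1 → U1 → ℝ} {p2 : Y2 → U2 → ℝ}

lemma bpUUY1_nonneg (hpY : IsPmf pY) (hp1 : IsChan p1) (hp2 : IsChan p2) (z : U1 × U2 × Y1) :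
    0 ≤ bpUUY1 pY p1 p2 z :=
  Finset.sum_nonneg fun _ _ => mul_nonneg (mul_nonneg (hpY.1 _) ((hp1 _).1 _)) ((hp2 _).1 _)

lemma bpUUY2_nonneg (hpY : IsPmf pY) (hp1 : IsChan p1) (hp2 : IsChan p2) (z : U1 × U2 × Y2) :
    0 ≤ bpUUY2 pY p1 p2 z :=
  Finset.sum_nonneg fun _ _ => mul_nonneg (mul_nonneg (hpY.1 _) ((hp1 _).1 _)) ((hp2 _).1 _)

lemma bpUU_nonneg (hpY : IsPmf pY) (hp1 : IsChan p1) (hp2 : IsChan p2) (u : U1 × U2) :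
    0 ≤ bpUU pY p1 p2 u :=
  Finset.sum_nonneg fun _ _ => bpUUY1_nonneg hpY hp1 hp2 _

lemma bpU2m_nonneg (hpY : IsPmf pY) (hp2 : IsChan p2) (u2 : U2) : 0 ≤ bpU2m pY p2 u2 :=
  Finset.sum_nonneg fun _ _ => mul_nonneg (Finset.sum_nonneg fun _ _ => hpY.1 _) ((hp2 _).1 _)

lemma isPmf_bpY1 (hpY : IsPmf pY) : IsPmf (bpY1 pY) :=
  ⟨fun _ => Finset.sum_nonneg fun _ _ => hpY.1 _, by rw [← hpY.2, Fintype.sum_prod_type]; rfl⟩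

lemma isPmf_bpY2 (hpY : IsPmf pY) : IsPmf (bpY2 pY) :=
  ⟨fun _ => Finset.sum_nonneg fun _ _ => hpY.1 _,
    by rw [← hpY.2, Fintype.sum_prod_type_right]; rfl⟩

lemma sum_bpU2m (hpY : IsPmf pY) (hp2 : IsChan p2) : ∑ u2, bpU2m pY p2 u2 = 1 := by
  rw [← (isPmf_bpY2 hpY).2]
  simp only [bpU2m]
  rw [Finset.sum_comm]
  exact Finset.sum_congr rfl fun y2 _ => by rw [← Finset.mul_sum, (hp2 y2).2, mul_one]

lemma sum_bpUU (hpY : IsPmf pY) (hp1 : IsChan p1) (hp2 : IsChan p2) :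
    ∑ u, bpUU pY p1 p2 u = 1 := by
  simp only [bpUU, bpUUY1]
  rw [Finset.sum_comm, ← hpY.2, Fintype.sum_prod_type]
  refine Finset.sum_congr rfl fun y1 _ => ?_
  rw [Finset.sum_comm]
  refine Finset.sum_congr rfl fun y2 _ => ?_
  rw [Fintype.sum_prod_type]
  simp only [← Finset.mul_sum, (hp1 y1).2, (hp2 y2).2, mul_one]

lemma ent_bU12_sub_ent_bY1U (hpY : IsPmf pY) (hp1 : IsChan p1) (hp2 : IsChan p2) :
    ent (bU12 (btJoint pY p1 p2)) - ent (bY1U (btJoint pY p1 p2))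
      = ∑ u : U1 × U2, ∑ y1, bpUUY1 pY p1 p2 (u.1, u.2, y1)
          * log (bpUUY1 pY p1 p2 (u.1, u.2, y1) / bpUU pY p1 p2 u) := by
  rw [ent, ent, Fintype.sum_prod_type_right (fun z : Y1 × U1 × U2 => negMulLog (bY1U _ z)),
    ← Finset.sum_sub_distrib]
  exact Finset.sum_congr rfl fun u _ =>
    (sum_mul_log_div_eq (f := fun y1 => bpUUY1 pY p1 p2 (u.1, u.2, y1))
      (m := bpUU pY p1 p2 u) (fun y1 => bpUUY1_nonneg hpY hp1 hp2 _) rfl).symm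

lemma ent_bU12_sub_ent_bY2U (hpY : IsPmf pY) (hp1 : IsChan p1) (hp2 : IsChan p2) :
    ent (bU12 (btJoint pY p1 p2)) - ent (bY2U (btJoint pY p1 p2))
      = ∑ u : U1 × U2, ∑ y2, bpUUY2 pY p1 p2 (u.1, u.2, y2)
          * log (bpUUY2 pY p1 p2 (u.1, u.2, y2) / bpUU pY p1 p2 u) := by
  rw [ent, ent, Fintype.sum_prod_type_right (fun z : Y2 × U1 × U2 => negMulLog (bY2U _ z)),
    ← Finset.sum_sub_distrib]
  exact Finset.sum_congr rfl fun u _ =>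
    (sum_mul_log_div_eq (f := fun y2 => bpUUY2 pY p1 p2 (u.1, u.2, y2))
      (m := bpUU pY p1 p2 u) (fun y2 => bpUUY2_nonneg hpY hp1 hp2 _) Finset.sum_comm).symm

lemma ent_bY1U2_sub_ent_bY1U (hp1 : IsChan p1) (hp2 : IsChan p2) :
    ent (bY1U2 (btJoint pY p1 p2)) - ent (bY1U (btJoint pY p1 p2))
      = ∑ u1, ∑ y1, p1 y1 u1 * bpY1 pY y1 * log (p1 y1 u1) := by
  set m := bY1U2 (btJoint pY p1 p2)
  have hm : ∀ y1 u2, m (y1, u2) = ∑ y2, pY (y1, y2) * p2 y2 u2 := fun y1 u2 => by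
    simp only [m, bY1U2, bY1U, btJoint]
    rw [Finset.sum_comm]
    exact Finset.sum_congr rfl fun y2 _ => sum_chan_mul hp1 y1 _ _
  -- the Markov chain `U₁ – Y₁ – U₂`
  have hmarkov : ∀ y1 u1 u2, bY1U (btJoint pY p1 p2) (y1, u1, u2) = m (y1, u2) * p1 y1 u1 :=
    fun y1 u1 u2 => by
      rw [hm, Finset.sum_mul]
      exact Finset.sum_congr rfl fun y2 _ => by simp only [btJoint]; ring
  have hent : ent (bY1U (btJoint pY p1 p2)) = ∑ z : Y1 × U2, ∑ u1, negMulLog (m z * p1 z.1 u1) := by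
    rw [ent, Fintype.sum_prod_type, Fintype.sum_prod_type]
    refine Finset.sum_congr rfl fun y1 _ => ?_
    rw [Fintype.sum_prod_type, Finset.sum_comm]
    exact Finset.sum_congr rfl fun u2 _ => Finset.sum_congr rfl fun u1 _ =>
      congrArg negMulLog (hmarkov y1 u1 u2)
  have hmarg : ∀ y1, ∑ u2, m (y1, u2) = bpY1 pY y1 := fun y1 => by
    simp only [hm]
    rw [Finset.sum_comm]
    exact Finset.sum_congr rfl fun y2 _ => by rw [← Finset.mul_sum, (hp2 y2).2, mul_one]
  rw [hent, sum_negMulLog_mul (w := fun (z : Y1 × U2) u1 => p1 z.1 u1) (fun z => (hp1 z.1).2) m,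
    ent, sub_add_cancel_left, Fintype.sum_prod_type, ← Finset.sum_neg_distrib]
  calc _ = ∑ y1, ∑ u1, p1 y1 u1 * bpY1 pY y1 * log (p1 y1 u1) := by
        refine Finset.sum_congr rfl fun y1 _ => ?_
        dsimp only
        rw [← Finset.sum_mul, hmarg, Finset.mul_sum, ← Finset.sum_neg_distrib]
        exact Finset.sum_congr rfl fun u1 _ => by rw [negMulLog]; ring
    _ = _ := Finset.sum_comm

lemma ent_bY2_sub_ent_bY2U2 (hp1 : IsChan p1) (hp2 : IsChan p2) :
    ent (bY2 (btJoint pY p1 p2)) - ent (bY2U2 (btJoint pY p1 p2))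
      = ∑ u2, ∑ y2, p2 y2 u2 * bpY2 pY y2 * log (p2 y2 u2) := by
  have hY2U2 : ∀ y2 u2, bY2U2 (btJoint pY p1 p2) (y2, u2) = bpY2 pY y2 * p2 y2 u2 :=
    fun y2 u2 => by
      simp only [bY2U2, bY2U, btJoint, bpY2, Finset.sum_mul]
      rw [Finset.sum_comm]
      exact Finset.sum_congr rfl fun y1 _ => sum_chan_mul hp1 y1 _ _
  have hY2 : bY2 (btJoint pY p1 p2) = bpY2 pY := funext fun y2 => by
    simp only [bY2, hY2U2, ← Finset.mul_sum, (hp2 y2).2, mul_one]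
  rw [hY2, ent, ent, Fintype.sum_prod_type]
  simp only [hY2U2]
  rw [sum_negMulLog_mul (fun y2 => (hp2 y2).2), sub_add_cancel_left, Finset.sum_comm,
    ← Finset.sum_neg_distrib]
  refine Finset.sum_congr rfl fun y2 _ => ?_
  simp only [Finset.mul_sum, ← Finset.sum_neg_distrib, negMulLog]
  exact Finset.sum_congr rfl fun u2 _ => by ring

lemma ent_bU2_btJoint (hp1 : IsChan p1) :
    ent (bU2 (btJoint pY p1 p2)) = -∑ u2, bpU2m pY p2 u2 * log (bpU2m pY p2 u2) := by
  have hU2 : bU2 (btJoint pY p1 p2) = bpU2m pY p2 := by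
    ext u2
    simp only [bU2, bU12, bY1U, btJoint, bpU2m, bpY2, Finset.sum_mul]
    calc _ = ∑ y1, ∑ y2, ∑ u1, pY (y1, y2) * p1 y1 u1 * p2 y2 u2 := by
          rw [Finset.sum_comm]
          exact Finset.sum_congr rfl fun y1 _ => Finset.sum_comm
      _ = _ := by
          simp only [sum_chan_mul hp1]
          exact Finset.sum_comm
  rw [hU2, sum_mul_log_eq_neg_ent, neg_neg]

end InducedLaws

section Optimality

variable {s1 s2 a : ℝ} {pY : Y1 × Y2 → ℝ} {p1 : Y1 → U1 → ℝ} {p2 : Y2 → U2 → ℝ}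
  {qY1 : U1 × U2 → Y1 → ℝ} {qY2 : U1 × U2 → Y2 → ℝ} {qUU : U1 × U2 → ℝ} {qU2 : U2 → ℝ}

/-- Exactly the `Q` for which `FbPQE` is finite: `Q` vanishes at no point where its
coefficient in `F_β(P,Q)` is positive. -/
def CoversSupport (s1 s2 a : ℝ) (pY : Y1 × Y2 → ℝ) (p1 : Y1 → U1 → ℝ) (p2 : Y2 → U2 → ℝ)
    (qY1 : U1 × U2 → Y1 → ℝ) (qY2 : U1 × U2 → Y2 → ℝ) (qUU : U1 × U2 → ℝ) (qU2 : U2 → ℝ) :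
    Prop :=
  (∀ u y1, 0 < a * bpUUY1 pY p1 p2 (u.1, u.2, y1) → qY1 u y1 ≠ 0) ∧
  (∀ u y2, 0 < (1 - a) * bpUUY2 pY p1 p2 (u.1, u.2, y2) → qY2 u y2 ≠ 0) ∧
  (∀ u, 0 < s1 * bpUU pY p1 p2 u → qUU u ≠ 0) ∧
  (∀ u2, 0 < s2 * bpU2m pY p2 u2 → qU2 u2 ≠ 0)

def klGap (s1 s2 a : ℝ) (pY : Y1 × Y2 → ℝ) (p1 : Y1 → U1 → ℝ) (p2 : Y2 → U2 → ℝ)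
    (qY1 : U1 × U2 → Y1 → ℝ) (qY2 : U1 × U2 → Y2 → ℝ) (qUU : U1 × U2 → ℝ) (qU2 : U2 → ℝ) :
    ℝ :=
  a * condKL (bpUU pY p1 p2) (fun u y1 => bpUUY1 pY p1 p2 (u.1, u.2, y1)) qY1
    + (1 - a) * condKL (bpUU pY p1 p2) (fun u y2 => bpUUY2 pY p1 p2 (u.1, u.2, y2)) qY2
    + s1 * KL (bpUU pY p1 p2) qUU + s2 * KL (bpU2m pY p2) qU2

open Classical in
lemma FbPQE_eq_ite : FbPQE s1 s2 a pY p1 p2 qY1 qY2 qUU qU2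
    = if CoversSupport s1 s2 a pY p1 p2 qY1 qY2 qUU qU2
      then ((FbPQ s1 s2 a pY p1 p2 qY1 qY2 qUU qU2 : ℝ) : EReal) else ⊤ := by
  simp only [FbPQE, nlogE_eq_ite, sum_ite_coe_top]
  rw [coe_add_ite_coe_top, ite_coe_top_add, ite_coe_top_add, ite_coe_top_add]
  refine if_congr ?_ ?_ rfl
  · simp only [CoversSupport, Prod.forall]
    tauto
  · congr 1
    simp only [FbPQ, Finset.sum_neg_distrib, Finset.mul_sum, mul_assoc]
    ring

lemma FbPQ_eq_Fb_add_klGap (hs1 : 0 ≤ s1) (hs2 : 0 ≤ s2) (ha0 : 0 ≤ a) (ha1 : a ≤ 1)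
    (hpY : IsPmf pY) (hp1 : IsChan p1) (hp2 : IsChan p2)
    (hQ : CoversSupport s1 s2 a pY p1 p2 qY1 qY2 qUU qU2) :
    FbPQ s1 s2 a pY p1 p2 qY1 qY2 qUU qU2
      = Fb s1 s2 a (btJoint pY p1 p2) + klGap s1 s2 a pY p1 p2 qY1 qY2 qUU qU2 := by
  obtain ⟨hQ1, hQ2, hQUU, hQU2⟩ := hQ
  have k1 := mul_eq_mul_of_pos_imp ha0 fun ha => condKL_eq_sub (m := bpUU pY p1 p2)
    (fun _ _ => bpUUY1_nonneg hpY hp1 hp2 _) (fun _ => rfl)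
    (fun u y1 h => hQ1 u y1 (mul_pos ha h))
  have k2 := mul_eq_mul_of_pos_imp (sub_nonneg.2 ha1) fun ha =>
    condKL_eq_sub (m := bpUU pY p1 p2) (fun _ _ => bpUUY2_nonneg hpY hp1 hp2 _)
      (fun _ => Finset.sum_comm) (fun u y2 h => hQ2 u y2 (mul_pos ha h))
  have k3 := mul_eq_mul_of_pos_imp hs1 fun hs =>
    KL_eq_sub (bpUU_nonneg hpY hp1 hp2) fun u h => hQUU u (mul_pos hs h)
  have k4 := mul_eq_mul_of_pos_imp hs2 fun hs =>
    KL_eq_sub (bpU2m_nonneg hpY hp2) fun u h => hQU2 u (mul_pos hs h)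
  have e1 := ent_bU12_sub_ent_bY1U hpY hp1 hp2
  have e2 := ent_bU12_sub_ent_bY2U hpY hp1 hp2
  have e3 := ent_bY1U2_sub_ent_bY1U (pY := pY) hp1 hp2
  have e4 := ent_bY2_sub_ent_bY2U2 (pY := pY) hp1 hp2
  have e5 := ent_bU2_btJoint (pY := pY) (p2 := p2) hp1
  have e6 : ∑ u, bpUU pY p1 p2 u * log (bpUU pY p1 p2 u) = -ent (bU12 (btJoint pY p1 p2)) :=
    sum_mul_log_eq_neg_ent _
  have n1 := Fintype.sum_prod_type fun u : U1 × U2 =>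
    ∑ y1, bpUUY1 pY p1 p2 (u.1, u.2, y1) * log (qY1 u y1)
  have n2 := Fintype.sum_prod_type fun u : U1 × U2 =>
    ∑ y2, bpUUY2 pY p1 p2 (u.1, u.2, y2) * log (qY2 u y2)
  have n3 := Fintype.sum_prod_type fun u : U1 × U2 => bpUU pY p1 p2 u * log (qUU u)
  simp only [FbPQ, Fb, bH1, bH2, bI1c, bI2m, klGap]
  rw [← n1, ← n2, ← n3]
  linear_combination -k1 - k2 - k3 - k4 + a * e1 + (1 - a) * e2 - s1 * e3 - s2 * e4
    + (s1 - s2) * e5 - s1 * e6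

lemma klGap_summands_nonneg (hs1 : 0 ≤ s1) (hs2 : 0 ≤ s2) (ha0 : 0 ≤ a) (ha1 : a ≤ 1)
    (hpY : IsPmf pY) (hp1 : IsChan p1) (hp2 : IsChan p2)
    (hc1 : IsChan qY1) (hc2 : IsChan qY2) (hc3 : IsPmf qUU) (hc4 : IsPmf qU2)
    (hQ : CoversSupport s1 s2 a pY p1 p2 qY1 qY2 qUU qU2) :
    0 ≤ a * condKL (bpUU pY p1 p2) (fun u y1 => bpUUY1 pY p1 p2 (u.1, u.2, y1)) qY1 ∧
    0 ≤ (1 - a) * condKL (bpUU pY p1 p2) (fun u y2 => bpUUY2 pY p1 p2 (u.1, u.2, y2)) qY2 ∧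
    0 ≤ s1 * KL (bpUU pY p1 p2) qUU ∧ 0 ≤ s2 * KL (bpU2m pY p2) qU2 := by
  obtain ⟨hQ1, hQ2, hQUU, hQU2⟩ := hQ
  refine ⟨mul_nonneg_of_pos_imp ha0 fun ha => ?_, mul_nonneg_of_pos_imp (sub_nonneg.2 ha1)
    fun ha => ?_, mul_nonneg_of_pos_imp hs1 fun hs => ?_, mul_nonneg_of_pos_imp hs2 fun hs => ?_⟩
  · exact condKL_nonneg (fun _ _ => bpUUY1_nonneg hpY hp1 hp2 _) (fun _ => rfl) hc1
      fun u y1 h => hQ1 u y1 (mul_pos ha h)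
  · exact condKL_nonneg (fun _ _ => bpUUY2_nonneg hpY hp1 hp2 _) (fun _ => Finset.sum_comm) hc2
      fun u y2 h => hQ2 u y2 (mul_pos ha h)
  · exact KL_nonneg (bpUU_nonneg hpY hp1 hp2) hc3.1
      (by rw [hc3.2, sum_bpUU hpY hp1 hp2]) fun u h => hQUU u (mul_pos hs h)
  · exact KL_nonneg (bpU2m_nonneg hpY hp2) hc4.1
      (by rw [hc4.2, sum_bpU2m hpY hp2]) fun u h => hQU2 u (mul_pos hs h)

lemma Fb_le_FbPQE (hs1 : 0 ≤ s1) (hs2 : 0 ≤ s2) (ha0 : 0 ≤ a) (ha1 : a ≤ 1)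
    (hpY : IsPmf pY) (hp1 : IsChan p1) (hp2 : IsChan p2)
    (hc1 : IsChan qY1) (hc2 : IsChan qY2) (hc3 : IsPmf qUU) (hc4 : IsPmf qU2) :
    ((Fb s1 s2 a (btJoint pY p1 p2) : ℝ) : EReal) ≤ FbPQE s1 s2 a pY p1 p2 qY1 qY2 qUU qU2 := by
  rw [FbPQE_eq_ite]
  split_ifs with hQ
  · obtain ⟨t1, t2, t3, t4⟩ :=
      klGap_summands_nonneg hs1 hs2 ha0 ha1 hpY hp1 hp2 hc1 hc2 hc3 hc4 hQ
    rw [EReal.coe_le_coe_iff, FbPQ_eq_Fb_add_klGap hs1 hs2 ha0 ha1 hpY hp1 hp2 hQ, klGap]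
    linarith
  · exact le_top

lemma eq_Qstar_of_FbPQE_eq_Fb (hs1 : 0 < s1) (hs2 : 0 < s2) (ha0 : 0 ≤ a) (ha1 : a ≤ 1)
    (hpY : IsPmf pY) (hp1 : IsChan p1) (hp2 : IsChan p2)
    (hc1 : IsChan qY1) (hc2 : IsChan qY2) (hc3 : IsPmf qUU) (hc4 : IsPmf qU2)
    (h : FbPQE s1 s2 a pY p1 p2 qY1 qY2 qUU qU2 = ((Fb s1 s2 a (btJoint pY p1 p2) : ℝ) : EReal)) :
    (0 < a → ∀ u : U1 × U2, 0 < bpUU pY p1 p2 u →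
        ∀ y1, 0 < bpUUY1 pY p1 p2 (u.1, u.2, y1) →
          qY1 u y1 = bpUUY1 pY p1 p2 (u.1, u.2, y1) / bpUU pY p1 p2 u) ∧
    (a < 1 → ∀ u : U1 × U2, 0 < bpUU pY p1 p2 u →
        ∀ y2, 0 < bpUUY2 pY p1 p2 (u.1, u.2, y2) →
          qY2 u y2 = bpUUY2 pY p1 p2 (u.1, u.2, y2) / bpUU pY p1 p2 u) ∧
    (∀ u : U1 × U2, 0 < bpUU pY p1 p2 u → qUU u = bpUU pY p1 p2 u) ∧
    (∀ u2, 0 < bpU2m pY p2 u2 → qU2 u2 = bpU2m pY p2 u2) := by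
  have hQ : CoversSupport s1 s2 a pY p1 p2 qY1 qY2 qUU qU2 := by
    by_contra hQ
    rw [FbPQE_eq_ite, if_neg hQ] at h
    exact EReal.coe_ne_top _ h.symm
  obtain ⟨hQ1, hQ2, hQUU, hQU2⟩ := id hQ
  obtain ⟨t1, t2, t3, t4⟩ :=
    klGap_summands_nonneg hs1.le hs2.le ha0 ha1 hpY hp1 hp2 hc1 hc2 hc3 hc4 hQ
  rw [FbPQE_eq_ite, if_pos hQ, EReal.coe_eq_coe_iff,
    FbPQ_eq_Fb_add_klGap hs1.le hs2.le ha0 ha1 hpY hp1 hp2 hQ, klGap, add_eq_left,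
    add_eq_zero_iff_of_nonneg (add_nonneg (add_nonneg t1 t2) t3) t4,
    add_eq_zero_iff_of_nonneg (add_nonneg t1 t2) t3, add_eq_zero_iff_of_nonneg t1 t2] at h
  obtain ⟨⟨⟨z1, z2⟩, z3⟩, z4⟩ := h
  refine ⟨fun ha u _ y1 hP => ?_, fun ha u _ y2 hP => ?_, fun u hP => ?_, fun u2 hP => ?_⟩
  · exact eq_div_of_condKL_eq_zero (fun _ _ => bpUUY1_nonneg hpY hp1 hp2 _) (fun _ => rfl) hc1
      (fun u y1 h => hQ1 u y1 (mul_pos ha h)) ((mul_eq_zero.1 z1).resolve_left ha.ne') hP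
  · have ha' := sub_pos.2 ha
    exact eq_div_of_condKL_eq_zero (fun _ _ => bpUUY2_nonneg hpY hp1 hp2 _)
      (fun _ => Finset.sum_comm) hc2 (fun u y2 h => hQ2 u y2 (mul_pos ha' h))
      ((mul_eq_zero.1 z2).resolve_left ha'.ne') hP
  · exact eq_of_KL_eq_zero (bpUU_nonneg hpY hp1 hp2) hc3.1
      (by rw [hc3.2, sum_bpUU hpY hp1 hp2]) (fun u h => hQUU u (mul_pos hs1 h))
      ((mul_eq_zero.1 z3).resolve_left hs1.ne') hP
  · exact eq_of_KL_eq_zero (bpU2m_nonneg hpY hp2) hc4.1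
      (by rw [hc4.2, sum_bpU2m hpY hp2]) (fun u h => hQU2 u (mul_pos hs2 h))
      ((mul_eq_zero.1 z4).resolve_left hs2.ne') hP

lemma FbPQE_eq_Fb_of_eq_Qstar (hs1 : 0 ≤ s1) (hs2 : 0 ≤ s2) (ha0 : 0 ≤ a) (ha1 : a ≤ 1)
    (hpY : IsPmf pY) (hp1 : IsChan p1) (hp2 : IsChan p2)
    (hA1 : ∀ u : U1 × U2, 0 < bpUU pY p1 p2 u →
      ∀ y1, qY1 u y1 = bpUUY1 pY p1 p2 (u.1, u.2, y1) / bpUU pY p1 p2 u)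
    (hA2 : ∀ u : U1 × U2, 0 < bpUU pY p1 p2 u →
      ∀ y2, qY2 u y2 = bpUUY2 pY p1 p2 (u.1, u.2, y2) / bpUU pY p1 p2 u)
    (hA3 : ∀ u : U1 × U2, qUU u = bpUU pY p1 p2 u) (hA4 : ∀ u2, qU2 u2 = bpU2m pY p2 u2) :
    FbPQE s1 s2 a pY p1 p2 qY1 qY2 qUU qU2 = ((Fb s1 s2 a (btJoint pY p1 p2) : ℝ) : EReal) := by
  have hF1 : ∀ (u : U1 × U2) y1, 0 ≤ bpUUY1 pY p1 p2 (u.1, u.2, y1) :=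
    fun _ _ => bpUUY1_nonneg hpY hp1 hp2 _
  have hF2 : ∀ (u : U1 × U2) y2, 0 ≤ bpUUY2 pY p1 p2 (u.1, u.2, y2) :=
    fun _ _ => bpUUY2_nonneg hpY hp1 hp2 _
  have hm1 : ∀ u : U1 × U2, ∑ y1, bpUUY1 pY p1 p2 (u.1, u.2, y1) = bpUU pY p1 p2 u :=
    fun _ => rfl
  have hm2 : ∀ u : U1 × U2, ∑ y2, bpUUY2 pY p1 p2 (u.1, u.2, y2) = bpUU pY p1 p2 u :=
    fun _ => Finset.sum_comm
  have hQ : CoversSupport s1 s2 a pY p1 p2 qY1 qY2 qUU qU2 := by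
    refine ⟨fun u y1 h => ?_, fun u y2 h => ?_, fun u h => ?_, fun u2 h => ?_⟩
    · have hP := pos_of_mul_pos_of_nonneg (hF1 u y1) h
      have hu := marginal_pos_of_pos hF1 hm1 hP
      exact (hA1 u hu y1).trans_ne (div_pos hP hu).ne'
    · have hP := pos_of_mul_pos_of_nonneg (hF2 u y2) h
      have hu := marginal_pos_of_pos hF2 hm2 hP
      exact (hA2 u hu y2).trans_ne (div_pos hP hu).ne'
    · exact (hA3 u).trans_ne (pos_of_mul_pos_of_nonneg (bpUU_nonneg hpY hp1 hp2 u) h).ne'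
    · exact (hA4 u2).trans_ne (pos_of_mul_pos_of_nonneg (bpU2m_nonneg hpY hp2 u2) h).ne'
  have hgap : klGap s1 s2 a pY p1 p2 qY1 qY2 qUU qU2 = 0 := by
    rw [klGap, condKL_eq_zero_of_eq_div hF1 hm1 hA1,
      condKL_eq_zero_of_eq_div hF2 hm2 hA2, funext hA3, funext hA4, KL_self, KL_self]
    ring
  rw [FbPQE_eq_ite, if_pos hQ, FbPQ_eq_Fb_add_klGap hs1 hs2 ha0 ha1 hpY hp1 hp2 hQ, hgap, add_zero]

lemma exists_FbPQE_eq_Fb (hs1 : 0 ≤ s1) (hs2 : 0 ≤ s2) (ha0 : 0 ≤ a) (ha1 : a ≤ 1)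
    (hpY : IsPmf pY) (hp1 : IsChan p1) (hp2 : IsChan p2) :
    ∃ qY1 : U1 × U2 → Y1 → ℝ, ∃ qY2 : U1 × U2 → Y2 → ℝ, ∃ qUU : U1 × U2 → ℝ, ∃ qU2 : U2 → ℝ,
      IsChan qY1 ∧ IsChan qY2 ∧ IsPmf qUU ∧ IsPmf qU2 ∧
      ((Fb s1 s2 a (btJoint pY p1 p2) : ℝ) : EReal) = FbPQE s1 s2 a pY p1 p2 qY1 qY2 qUU qU2 :=
  -- rows of `Q*` with `P(u₁,u₂) = 0` are unconstrained; the source marginals fill them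
  ⟨_, _, _, _,
    isChan_ite_div (m := bpUU pY p1 p2) (F := fun u y1 => bpUUY1 pY p1 p2 (u.1, u.2, y1))
      (fun _ _ => bpUUY1_nonneg hpY hp1 hp2 _) (fun _ => rfl) (isPmf_bpY1 hpY),
    isChan_ite_div (m := bpUU pY p1 p2) (F := fun u y2 => bpUUY2 pY p1 p2 (u.1, u.2, y2))
      (fun _ _ => bpUUY2_nonneg hpY hp1 hp2 _) (fun _ => Finset.sum_comm) (isPmf_bpY2 hpY),
    ⟨bpUU_nonneg hpY hp1 hp2, sum_bpUU hpY hp1 hp2⟩, ⟨bpU2m_nonneg hpY hp2, sum_bpU2m hpY hp2⟩,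
    (FbPQE_eq_Fb_of_eq_Qstar hs1 hs2 ha0 ha1 hpY hp1 hp2 (fun _ hu _ => if_pos hu)
      (fun _ hu _ => if_pos hu) (fun _ => rfl) (fun _ => rfl)).symm⟩

end Optimality

/-- **Lemma 4** (optimal `Q` for fixed `P` in the multiterminal problem, with KL
decomposition): for strictly positive `Q`,
`F_β(P,Q) − F_β(P)` is the stated nonnegative combination of KL divergences; consequently
`inf_Q F_β(P,Q) = F_β(P)`, attained at the `Q*` induced by `P`, and equality forces `Q` to
coincide with `Q*` wherever the corresponding induced probabilities are positive. -/
theorem bt_optimal_Q_for_fixed_P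
    (pY : Y1 × Y2 → ℝ) (hpY : IsPmf pY)
    (s1 s2 a : ℝ) (hs1 : 0 < s1) (hs2 : 0 < s2) (ha0 : 0 ≤ a) (ha1 : a ≤ 1)
    (p1 : Y1 → U1 → ℝ) (p2 : Y2 → U2 → ℝ) (hp1 : IsChan p1) (hp2 : IsChan p2) :
    -- KL decomposition for strictly positive `Q`
    (∀ (qY1 : U1 × U2 → Y1 → ℝ) (qY2 : U1 × U2 → Y2 → ℝ)
       (qUU : U1 × U2 → ℝ) (qU2 : U2 → ℝ),
      IsChan qY1 → IsChan qY2 → IsPmf qUU → IsPmf qU2 →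
      (∀ u y1, 0 < qY1 u y1) → (∀ u y2, 0 < qY2 u y2) →
      (∀ u, 0 < qUU u) → (∀ u2, 0 < qU2 u2) →
      FbPQ s1 s2 a pY p1 p2 qY1 qY2 qUU qU2 - Fb s1 s2 a (btJoint pY p1 p2)
        = a * (∑ u : U1 × U2, bpUU pY p1 p2 u
            * KL (fun y1 => bpUUY1 pY p1 p2 (u.1, u.2, y1) / bpUU pY p1 p2 u) (qY1 u))
          + (1 - a) * (∑ u : U1 × U2, bpUU pY p1 p2 u
            * KL (fun y2 => bpUUY2 pY p1 p2 (u.1, u.2, y2) / bpUU pY p1 p2 u) (qY2 u))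
          + s1 * KL (bpUU pY p1 p2) qUU
          + s2 * KL (bpU2m pY p2) qU2 ∧
      0 ≤ FbPQ s1 s2 a pY p1 p2 qY1 qY2 qUU qU2 - Fb s1 s2 a (btJoint pY p1 p2)) ∧
    -- the infimum over all auxiliary tuples equals `F_β(P)` ...
    sInf {v : EReal | ∃ qY1 : U1 × U2 → Y1 → ℝ, ∃ qY2 : U1 × U2 → Y2 → ℝ,
        ∃ qUU : U1 × U2 → ℝ, ∃ qU2 : U2 → ℝ,
        IsChan qY1 ∧ IsChan qY2 ∧ IsPmf qUU ∧ IsPmf qU2 ∧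
        v = FbPQE s1 s2 a pY p1 p2 qY1 qY2 qUU qU2}
      = ((Fb s1 s2 a (btJoint pY p1 p2) : ℝ) : EReal) ∧
    -- ... and is attained at the `Q*` induced by `P`
    (∀ (qY1 : U1 × U2 → Y1 → ℝ) (qY2 : U1 × U2 → Y2 → ℝ)
       (qUU : U1 × U2 → ℝ) (qU2 : U2 → ℝ),
      IsChan qY1 → IsChan qY2 → IsPmf qUU → IsPmf qU2 →
      (∀ u : U1 × U2, 0 < bpUU pY p1 p2 u →
        ∀ y1, qY1 u y1 = bpUUY1 pY p1 p2 (u.1, u.2, y1) / bpUU pY p1 p2 u) →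
      (∀ u : U1 × U2, 0 < bpUU pY p1 p2 u →
        ∀ y2, qY2 u y2 = bpUUY2 pY p1 p2 (u.1, u.2, y2) / bpUU pY p1 p2 u) →
      (∀ u : U1 × U2, qUU u = bpUU pY p1 p2 u) → (∀ u2, qU2 u2 = bpU2m pY p2 u2) →
      FbPQE s1 s2 a pY p1 p2 qY1 qY2 qUU qU2
        = ((Fb s1 s2 a (btJoint pY p1 p2) : ℝ) : EReal)) ∧
    -- equality forces `Q` to agree with `Q*` wherever the induced probabilities are positive
    (∀ (qY1 : U1 × U2 → Y1 → ℝ) (qY2 : U1 × U2 → Y2 → ℝ)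
       (qUU : U1 × U2 → ℝ) (qU2 : U2 → ℝ),
      IsChan qY1 → IsChan qY2 → IsPmf qUU → IsPmf qU2 →
      FbPQE s1 s2 a pY p1 p2 qY1 qY2 qUU qU2
          = ((Fb s1 s2 a (btJoint pY p1 p2) : ℝ) : EReal) →
      ((0 < a → ∀ u : U1 × U2, 0 < bpUU pY p1 p2 u →
          ∀ y1, 0 < bpUUY1 pY p1 p2 (u.1, u.2, y1) →
            qY1 u y1 = bpUUY1 pY p1 p2 (u.1, u.2, y1) / bpUU pY p1 p2 u) ∧
       (a < 1 → ∀ u : U1 × U2, 0 < bpUU pY p1 p2 u →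
          ∀ y2, 0 < bpUUY2 pY p1 p2 (u.1, u.2, y2) →
            qY2 u y2 = bpUUY2 pY p1 p2 (u.1, u.2, y2) / bpUU pY p1 p2 u) ∧
       (∀ u : U1 × U2, 0 < bpUU pY p1 p2 u → qUU u = bpUU pY p1 p2 u) ∧
       (∀ u2, 0 < bpU2m pY p2 u2 → qU2 u2 = bpU2m pY p2 u2))) := by
  refine ⟨fun qY1 qY2 qUU qU2 hc1 hc2 hc3 hc4 h1 h2 h3 h4 => ?_, le_antisymm ?_ ?_,
    fun qY1 qY2 qUU qU2 _ _ _ _ hA1 hA2 hA3 hA4 =>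
      FbPQE_eq_Fb_of_eq_Qstar hs1.le hs2.le ha0 ha1 hpY hp1 hp2 hA1 hA2 hA3 hA4,
    fun qY1 qY2 qUU qU2 hc1 hc2 hc3 hc4 h =>
      eq_Qstar_of_FbPQE_eq_Fb hs1 hs2 ha0 ha1 hpY hp1 hp2 hc1 hc2 hc3 hc4 h⟩
  · have hQ : CoversSupport s1 s2 a pY p1 p2 qY1 qY2 qUU qU2 :=
      ⟨fun u y1 _ => (h1 u y1).ne', fun u y2 _ => (h2 u y2).ne', fun u _ => (h3 u).ne',
        fun u2 _ => (h4 u2).ne'⟩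
    obtain ⟨t1, t2, t3, t4⟩ :=
      klGap_summands_nonneg hs1.le hs2.le ha0 ha1 hpY hp1 hp2 hc1 hc2 hc3 hc4 hQ
    rw [FbPQ_eq_Fb_add_klGap hs1.le hs2.le ha0 ha1 hpY hp1 hp2 hQ, add_sub_cancel_left]
    exact ⟨rfl, by rw [klGap]; linarith⟩
  · exact sInf_le (exists_FbPQE_eq_Fb hs1.le hs2.le ha0 ha1 hpY hp1 hp2)
  · refine le_sInf ?_
    rintro v ⟨qY1, qY2, qUU, qU2, hc1, hc2, hc3, hc4, rfl⟩
    exact Fb_le_FbPQE hs1.le hs2.le ha0 ha1 hpY hp1 hp2 hc1 hc2 hc3 hc4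
end
end

section
/- (Lemma 5, optimal P_{U₁|Y₁} for fixed Q and fixed P_{U₂|Y₂} in the multiterminal problem.) Fix β=(s₁,s₂,α) with s₁,s₂>0, α∈[0,1], ᾱ:=1−α, an auxiliary tuple Q with strictly positive components, and a conditional pmf P_{U₂|Y₂}; assume p(y₁)>0 for all y₁. Define μ₁(u₁,y₁) := (α/s₁) Σ_{u₂} p(u₂|y₁) log q(y₁|u₁,u₂) + (ᾱ/s₁) Σ_{u₂,y₂} p(y₂|y₁) p(u₂|y₂) log q(y₂|u₁,u₂) + Σ_{u₂} p(u₂|y₁) log q(u₁,u₂), where p(u₂|y₁)=Σ_{y₂} p(y₂|y₁)p(u₂|y₂). Then the map P_{U₁|Y₁} ↦ F_β((P_{U₁|Y₁},P_{U₂|Y₂}),Q) attains its minimum over conditional pmfs from 𝒴₁ to 𝒰₁ at the unique point given by p(u₁|y₁) = exp(μ₁(u₁,y₁)) / Σ_{u₁'} exp(μ₁(u₁',y₁)). -/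
open Finset Real

noncomputable section

variable {Y1 Y2 U1 U2 : Type} [Fintype Y1] [Fintype Y2] [Fintype U1] [Fintype U2]

/-- The exponent `μ₁(u₁,y₁)` of Lemma 5:
`μ₁(u₁,y₁) = (α/s₁) Σ_{u₂} p(u₂|y₁) log q(y₁|u₁,u₂)
           + (ᾱ/s₁) Σ_{u₂,y₂} p(y₂|y₁) p(u₂|y₂) log q(y₂|u₁,u₂)
           + Σ_{u₂} p(u₂|y₁) log q(u₁,u₂)`,
with `p(y₂|y₁) = p(y₁,y₂)/p(y₁)` and `p(u₂|y₁) = Σ_{y₂} p(y₂|y₁) p(u₂|y₂)`. -/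
def mu1 (s1 a : ℝ) (pY : Y1 × Y2 → ℝ) (p2 : Y2 → U2 → ℝ)
    (qY1 : U1 × U2 → Y1 → ℝ) (qY2 : U1 × U2 → Y2 → ℝ) (qUU : U1 × U2 → ℝ)
    (u1 : U1) (y1 : Y1) : ℝ :=
  (a / s1) * (∑ u2, (∑ y2, (pY (y1, y2) / bpY1 pY y1) * p2 y2 u2)
      * Real.log (qY1 (u1, u2) y1))
  + ((1 - a) / s1) * (∑ u2, ∑ y2, (pY (y1, y2) / bpY1 pY y1) * p2 y2 u2
      * Real.log (qY2 (u1, u2) y2))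
  + (∑ u2, (∑ y2, (pY (y1, y2) / bpY1 pY y1) * p2 y2 u2) * Real.log (qUU (u1, u2)))


section AuxForBT

lemma gibbs_point {p q : ℝ} (hp : 0 ≤ p) (hq : 0 < q) :
    0 ≤ (q - p) + (p * Real.log p - p * Real.log q) ∧
    ((q - p) + (p * Real.log p - p * Real.log q) = 0 → p = q) := by
  rcases eq_or_lt_of_le hp with h0 | hpos
  · constructor
    · simp [← h0]; linarith
    · intro h; simp [← h0] at h; linarith
  · have ht : 0 < q / p := div_pos hq hpos
    have hrw : (q - p) + (p * Real.log p - p * Real.log q)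
        = p * ((q / p - 1) - Real.log (q / p)) := by
      rw [Real.log_div hq.ne' hpos.ne']
      field_simp
      ring
    constructor
    · rw [hrw]
      have := Real.log_le_sub_one_of_pos ht
      nlinarith
    · intro h
      rw [hrw] at h
      by_contra hne
      have hne1 : q / p ≠ 1 := by
        intro h1
        exact hne ((div_eq_one_iff_eq hpos.ne').mp h1).symm
      have := Real.log_lt_sub_one_of_pos ht hne1
      nlinarith

lemma gibbs {α : Type} [Fintype α] (p q : α → ℝ) (hp0 : ∀ a, 0 ≤ p a)
    (hp1 : ∑ a, p a = 1) (hq1 : ∑ a, q a = 1) (hqpos : ∀ a, 0 < q a) :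
    (∑ a, p a * Real.log (q a)) ≤ ∑ a, p a * Real.log (p a) ∧
    ((∑ a, p a * Real.log (p a)) = ∑ a, p a * Real.log (q a) → p = q) := by
  have hsum : ∑ a, ((q a - p a) + (p a * Real.log (p a) - p a * Real.log (q a)))
      = ∑ a, p a * Real.log (p a) - ∑ a, p a * Real.log (q a) := by
    rw [Finset.sum_add_distrib, Finset.sum_sub_distrib, Finset.sum_sub_distrib, hp1, hq1]
    ring
  have hnn : ∀ a ∈ Finset.univ, 0 ≤ (q a - p a) + (p a * Real.log (p a) - p a * Real.log (q a)) :=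
    fun a _ => (gibbs_point (hp0 a) (hqpos a)).1
  constructor
  · have := Finset.sum_nonneg hnn
    rw [hsum] at this; linarith
  · intro heq
    have hz : ∑ a, ((q a - p a) + (p a * Real.log (p a) - p a * Real.log (q a))) = 0 := by
      rw [hsum, heq]; ring
    have := (Finset.sum_eq_zero_iff_of_nonneg hnn).mp hz
    funext x
    exact (gibbs_point (hp0 x) (hqpos x)).2 (this x (Finset.mem_univ x))

end AuxForBT

lemma bt_main_y1 (pY : Y1 × Y2 → ℝ) (s1 a : ℝ) (hs1 : s1 ≠ 0)
    (qY1 : U1 × U2 → Y1 → ℝ) (qY2 : U1 × U2 → Y2 → ℝ) (qUU : U1 × U2 → ℝ)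
    (p2 : Y2 → U2 → ℝ) (p1 : Y1 → U1 → ℝ)
    (y1 : Y1) (hP : bpY1 pY y1 ≠ 0) :
    s1 * (bpY1 pY y1 * ∑ u1, p1 y1 u1 *
        (Real.log (p1 y1 u1) - mu1 s1 a pY p2 qY1 qY2 qUU u1 y1))
    = s1 * (∑ u1, p1 y1 u1 * bpY1 pY y1 * Real.log (p1 y1 u1))
      - a * (∑ u1, ∑ u2, (∑ y2, pY (y1, y2) * p1 y1 u1 * p2 y2 u2)
          * Real.log (qY1 (u1, u2) y1))
      - (1 - a) * (∑ u1, ∑ u2, ∑ y2, pY (y1, y2) * p1 y1 u1 * p2 y2 u2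
          * Real.log (qY2 (u1, u2) y2))
      - s1 * (∑ u1, ∑ u2, (∑ y2, pY (y1, y2) * p1 y1 u1 * p2 y2 u2)
          * Real.log (qUU (u1, u2))) := by
  set P := bpY1 pY y1 with hPdef
  have main_u1 : ∀ u1 : U1,
      s1 * (P * (p1 y1 u1 * (Real.log (p1 y1 u1) - mu1 s1 a pY p2 qY1 qY2 qUU u1 y1)))
      = s1 * (p1 y1 u1 * P * Real.log (p1 y1 u1))
        - a * (∑ u2, (∑ y2, pY (y1, y2) * p1 y1 u1 * p2 y2 u2)
            * Real.log (qY1 (u1, u2) y1))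
        - (1 - a) * (∑ u2, ∑ y2, pY (y1, y2) * p1 y1 u1 * p2 y2 u2
            * Real.log (qY2 (u1, u2) y2))
        - s1 * (∑ u2, (∑ y2, pY (y1, y2) * p1 y1 u1 * p2 y2 u2)
            * Real.log (qUU (u1, u2))) := by
    intro u1
    have hW : ∀ u2 : U2, ∑ y2, (pY (y1, y2) / P) * p2 y2 u2
        = (∑ y2, pY (y1, y2) * p2 y2 u2) / P := by
      intro u2
      rw [Finset.sum_div]
      exact Finset.sum_congr rfl fun y2 _ => div_mul_eq_mul_div _ _ _
    have hV : ∀ u2 : U2, ∑ y2, pY (y1, y2) * p1 y1 u1 * p2 y2 u2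
        = p1 y1 u1 * ∑ y2, pY (y1, y2) * p2 y2 u2 := by
      intro u2
      rw [Finset.mul_sum]
      exact Finset.sum_congr rfl fun y2 _ => by ring
    have eq1 : s1 * (P * (p1 y1 u1 * ((a / s1) * ∑ u2, (∑ y2, (pY (y1, y2) / P) * p2 y2 u2)
          * Real.log (qY1 (u1, u2) y1))))
        = a * ∑ u2, (∑ y2, pY (y1, y2) * p1 y1 u1 * p2 y2 u2)
            * Real.log (qY1 (u1, u2) y1) := by
      simp only [Finset.mul_sum]
      refine Finset.sum_congr rfl fun u2 _ => ?_
      rw [hW u2, hV u2]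
      field_simp
    have eq2 : s1 * (P * (p1 y1 u1 * (((1 - a) / s1) * ∑ u2, ∑ y2, (pY (y1, y2) / P) * p2 y2 u2
          * Real.log (qY2 (u1, u2) y2))))
        = (1 - a) * ∑ u2, ∑ y2, pY (y1, y2) * p1 y1 u1 * p2 y2 u2
            * Real.log (qY2 (u1, u2) y2) := by
      simp only [Finset.mul_sum]
      refine Finset.sum_congr rfl fun u2 _ => ?_
      refine Finset.sum_congr rfl fun y2 _ => ?_
      have h1 : (1 - a) / s1 * s1 = 1 - a := div_mul_cancel₀ _ hs1
      have h2 : pY (y1, y2) / P * P = pY (y1, y2) := div_mul_cancel₀ _ hP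
      linear_combination (p1 y1 u1 * p2 y2 u2 * Real.log (qY2 (u1, u2) y2)
          * (pY (y1, y2) / P * P)) * h1
        + ((1 - a) * p1 y1 u1 * p2 y2 u2 * Real.log (qY2 (u1, u2) y2)) * h2
    have eq3 : s1 * (P * (p1 y1 u1 * (∑ u2, (∑ y2, (pY (y1, y2) / P) * p2 y2 u2)
          * Real.log (qUU (u1, u2)))))
        = s1 * ∑ u2, (∑ y2, pY (y1, y2) * p1 y1 u1 * p2 y2 u2)
            * Real.log (qUU (u1, u2)) := by
      simp only [Finset.mul_sum]
      refine Finset.sum_congr rfl fun u2 _ => ?_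
      rw [hW u2, hV u2]
      have h2 : (∑ y2, pY (y1, y2) * p2 y2 u2) / P * P = ∑ y2, pY (y1, y2) * p2 y2 u2 :=
        div_mul_cancel₀ _ hP
      linear_combination (s1 * p1 y1 u1 * Real.log (qUU (u1, u2))) * h2
    simp only [mu1, ← hPdef]
    linear_combination -eq1 - eq2 - eq3
  calc s1 * (P * ∑ u1, p1 y1 u1 *
        (Real.log (p1 y1 u1) - mu1 s1 a pY p2 qY1 qY2 qUU u1 y1))
      = ∑ u1, s1 * (P * (p1 y1 u1 *
          (Real.log (p1 y1 u1) - mu1 s1 a pY p2 qY1 qY2 qUU u1 y1))) := by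
        rw [Finset.mul_sum, Finset.mul_sum]
    _ = ∑ u1, (s1 * (p1 y1 u1 * P * Real.log (p1 y1 u1))
        - a * (∑ u2, (∑ y2, pY (y1, y2) * p1 y1 u1 * p2 y2 u2)
            * Real.log (qY1 (u1, u2) y1))
        - (1 - a) * (∑ u2, ∑ y2, pY (y1, y2) * p1 y1 u1 * p2 y2 u2
            * Real.log (qY2 (u1, u2) y2))
        - s1 * (∑ u2, (∑ y2, pY (y1, y2) * p1 y1 u1 * p2 y2 u2)
            * Real.log (qUU (u1, u2)))) := Finset.sum_congr rfl fun u1 _ => main_u1 u1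
    _ = _ := by
        simp only [Finset.sum_sub_distrib, ← Finset.mul_sum]

lemma sum_comm3 {A B C : Type} [Fintype A] [Fintype B] [Fintype C] (f : A → B → C → ℝ) :
    ∑ a, ∑ b, ∑ c, f a b c = ∑ c, ∑ a, ∑ b, f a b c := by
  calc ∑ a, ∑ b, ∑ c, f a b c = ∑ a, ∑ c, ∑ b, f a b c :=
        Finset.sum_congr rfl fun a _ => Finset.sum_comm
    _ = ∑ c, ∑ a, ∑ b, f a b c := Finset.sum_comm

lemma sum_comm4 {A B C D : Type} [Fintype A] [Fintype B] [Fintype C] [Fintype D]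
    (f : A → B → C → D → ℝ) :
    ∑ a, ∑ b, ∑ c, ∑ d, f a b c d = ∑ d, ∑ a, ∑ b, ∑ c, f a b c d := by
  calc ∑ a, ∑ b, ∑ c, ∑ d, f a b c d = ∑ a, ∑ d, ∑ b, ∑ c, f a b c d :=
        Finset.sum_congr rfl fun a _ => sum_comm3 _
    _ = ∑ d, ∑ a, ∑ b, ∑ c, f a b c d := Finset.sum_comm

lemma bt_decomp (pY : Y1 × Y2 → ℝ) (s1 s2 a : ℝ) (hs1 : s1 ≠ 0)
    (qY1 : U1 × U2 → Y1 → ℝ) (qY2 : U1 × U2 → Y2 → ℝ)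
    (qUU : U1 × U2 → ℝ) (qU2 : U2 → ℝ)
    (p2 : Y2 → U2 → ℝ) (p1 : Y1 → U1 → ℝ)
    (hY1 : ∀ y1, bpY1 pY y1 ≠ 0) :
    FbPQ s1 s2 a pY p1 p2 qY1 qY2 qUU qU2
    = (s2 * (∑ u2, ∑ y2, p2 y2 u2 * bpY2 pY y2 * Real.log (p2 y2 u2))
       + s1 * (∑ u2, bpU2m pY p2 u2 * Real.log (bpU2m pY p2 u2))
       - s2 * (∑ u2, bpU2m pY p2 u2 * Real.log (qU2 u2)))
      + s1 * ∑ y1, bpY1 pY y1 * (∑ u1, p1 y1 u1 *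
          (Real.log (p1 y1 u1) - mu1 s1 a pY p2 qY1 qY2 qUU u1 y1)) := by
  have hmulsum : s1 * ∑ y1, bpY1 pY y1 * (∑ u1, p1 y1 u1 *
        (Real.log (p1 y1 u1) - mu1 s1 a pY p2 qY1 qY2 qUU u1 y1))
      = ∑ y1, s1 * (bpY1 pY y1 * (∑ u1, p1 y1 u1 *
        (Real.log (p1 y1 u1) - mu1 s1 a pY p2 qY1 qY2 qUU u1 y1))) := Finset.mul_sum _ _ _
  have hkeysum : ∑ y1, s1 * (bpY1 pY y1 * (∑ u1, p1 y1 u1 *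
        (Real.log (p1 y1 u1) - mu1 s1 a pY p2 qY1 qY2 qUU u1 y1)))
      = ∑ y1, (s1 * (∑ u1, p1 y1 u1 * bpY1 pY y1 * Real.log (p1 y1 u1))
        - a * (∑ u1, ∑ u2, (∑ y2, pY (y1, y2) * p1 y1 u1 * p2 y2 u2)
            * Real.log (qY1 (u1, u2) y1))
        - (1 - a) * (∑ u1, ∑ u2, ∑ y2, pY (y1, y2) * p1 y1 u1 * p2 y2 u2
            * Real.log (qY2 (u1, u2) y2))
        - s1 * (∑ u1, ∑ u2, (∑ y2, pY (y1, y2) * p1 y1 u1 * p2 y2 u2)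
            * Real.log (qUU (u1, u2)))) :=
    Finset.sum_congr rfl fun y1 _ => bt_main_y1 pY s1 a hs1 qY1 qY2 qUU p2 p1 y1 (hY1 y1)
  have hsplit : ∑ y1, (s1 * (∑ u1, p1 y1 u1 * bpY1 pY y1 * Real.log (p1 y1 u1))
        - a * (∑ u1, ∑ u2, (∑ y2, pY (y1, y2) * p1 y1 u1 * p2 y2 u2)
            * Real.log (qY1 (u1, u2) y1))
        - (1 - a) * (∑ u1, ∑ u2, ∑ y2, pY (y1, y2) * p1 y1 u1 * p2 y2 u2
            * Real.log (qY2 (u1, u2) y2))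
        - s1 * (∑ u1, ∑ u2, (∑ y2, pY (y1, y2) * p1 y1 u1 * p2 y2 u2)
            * Real.log (qUU (u1, u2))))
      = (∑ y1, s1 * (∑ u1, p1 y1 u1 * bpY1 pY y1 * Real.log (p1 y1 u1)))
        - (∑ y1, a * (∑ u1, ∑ u2, (∑ y2, pY (y1, y2) * p1 y1 u1 * p2 y2 u2)
            * Real.log (qY1 (u1, u2) y1)))
        - (∑ y1, (1 - a) * (∑ u1, ∑ u2, ∑ y2, pY (y1, y2) * p1 y1 u1 * p2 y2 u2
            * Real.log (qY2 (u1, u2) y2)))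
        - (∑ y1, s1 * (∑ u1, ∑ u2, (∑ y2, pY (y1, y2) * p1 y1 u1 * p2 y2 u2)
            * Real.log (qUU (u1, u2)))) := by
    simp only [Finset.sum_sub_distrib]
  have hT1 : s1 * (∑ u1, ∑ y1, p1 y1 u1 * bpY1 pY y1 * Real.log (p1 y1 u1))
      = ∑ y1, s1 * (∑ u1, p1 y1 u1 * bpY1 pY y1 * Real.log (p1 y1 u1)) := by
    rw [Finset.sum_comm, Finset.mul_sum]
  have hT5 : a * (∑ u1, ∑ u2, ∑ y1, bpUUY1 pY p1 p2 (u1, u2, y1) * Real.log (qY1 (u1, u2) y1))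
      = ∑ y1, a * (∑ u1, ∑ u2, (∑ y2, pY (y1, y2) * p1 y1 u1 * p2 y2 u2)
          * Real.log (qY1 (u1, u2) y1)) := by
    simp only [bpUUY1]
    rw [sum_comm3, Finset.mul_sum]
  have hT6 : (1 - a) * (∑ u1, ∑ u2, ∑ y2, bpUUY2 pY p1 p2 (u1, u2, y2)
        * Real.log (qY2 (u1, u2) y2))
      = ∑ y1, (1 - a) * (∑ u1, ∑ u2, ∑ y2, pY (y1, y2) * p1 y1 u1 * p2 y2 u2
          * Real.log (qY2 (u1, u2) y2)) := by
    simp only [bpUUY2, Finset.sum_mul]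
    rw [sum_comm4, Finset.mul_sum]
  have hT7 : s1 * (∑ u1, ∑ u2, bpUU pY p1 p2 (u1, u2) * Real.log (qUU (u1, u2)))
      = ∑ y1, s1 * (∑ u1, ∑ u2, (∑ y2, pY (y1, y2) * p1 y1 u1 * p2 y2 u2)
          * Real.log (qUU (u1, u2))) := by
    simp only [bpUU, bpUUY1, Finset.sum_mul]
    rw [sum_comm3, Finset.mul_sum]
  unfold FbPQ
  linear_combination hT1 - hT5 - hT6 - hT7 - hsplit - hkeysum - hmulsum

/-- The per-`y₁` partial functional appearing in the decomposition of `F_β`. -/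
def Gfun (s1 a : ℝ) (pY : Y1 × Y2 → ℝ) (p2 : Y2 → U2 → ℝ)
    (qY1 : U1 × U2 → Y1 → ℝ) (qY2 : U1 × U2 → Y2 → ℝ) (qUU : U1 × U2 → ℝ)
    (p1 : Y1 → U1 → ℝ) (y1 : Y1) : ℝ :=
  ∑ u1, p1 y1 u1 * (Real.log (p1 y1 u1) - mu1 s1 a pY p2 qY1 qY2 qUU u1 y1)

lemma bt_decomp' (pY : Y1 × Y2 → ℝ) (s1 s2 a : ℝ) (hs1 : s1 ≠ 0)
    (qY1 : U1 × U2 → Y1 → ℝ) (qY2 : U1 × U2 → Y2 → ℝ)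
    (qUU : U1 × U2 → ℝ) (qU2 : U2 → ℝ)
    (p2 : Y2 → U2 → ℝ) (p1 : Y1 → U1 → ℝ)
    (hY1 : ∀ y1, bpY1 pY y1 ≠ 0) :
    FbPQ s1 s2 a pY p1 p2 qY1 qY2 qUU qU2
    = (s2 * (∑ u2, ∑ y2, p2 y2 u2 * bpY2 pY y2 * Real.log (p2 y2 u2))
       + s1 * (∑ u2, bpU2m pY p2 u2 * Real.log (bpU2m pY p2 u2))
       - s2 * (∑ u2, bpU2m pY p2 u2 * Real.log (qU2 u2)))
      + s1 * ∑ y1, bpY1 pY y1 * Gfun s1 a pY p2 qY1 qY2 qUU p1 y1 := by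
  unfold Gfun
  exact bt_decomp pY s1 s2 a hs1 qY1 qY2 qUU qU2 p2 p1 hY1

/-- **Lemma 5, optimal `P_{U₁|Y₁}` for fixed `Q` and fixed `P_{U₂|Y₂}`** in the
multiterminal problem: the minimum of `P_{U₁|Y₁} ↦ F_β((P_{U₁|Y₁},P_{U₂|Y₂}),Q)` over
channels from `Y₁` to `U₁` is attained at the unique point
`p(u₁|y₁) = exp μ₁(u₁,y₁) / Σ_{u₁'} exp μ₁(u₁',y₁)`. -/
theorem bt_optimal_P1_for_fixed_Q
    (pY : Y1 × Y2 → ℝ) (hpY : IsPmf pY)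
    (s1 s2 a : ℝ) (hs1 : 0 < s1) (hs2 : 0 < s2) (ha0 : 0 ≤ a) (ha1 : a ≤ 1)
    (qY1 : U1 × U2 → Y1 → ℝ) (qY2 : U1 × U2 → Y2 → ℝ)
    (qUU : U1 × U2 → ℝ) (qU2 : U2 → ℝ)
    (hqY1 : IsChan qY1) (hqY2 : IsChan qY2) (hqUU : IsPmf qUU) (hqU2 : IsPmf qU2)
    (hqY1pos : ∀ u y1, 0 < qY1 u y1) (hqY2pos : ∀ u y2, 0 < qY2 u y2)
    (hqUUpos : ∀ u, 0 < qUU u) (hqU2pos : ∀ u2, 0 < qU2 u2)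
    (p2 : Y2 → U2 → ℝ) (hp2 : IsChan p2)
    (hY1pos : ∀ y1, 0 < bpY1 pY y1)
    (p1opt : Y1 → U1 → ℝ)
    (hp1opt : ∀ y1 u1, p1opt y1 u1
      = Real.exp (mu1 s1 a pY p2 qY1 qY2 qUU u1 y1)
        / ∑ u1' : U1, Real.exp (mu1 s1 a pY p2 qY1 qY2 qUU u1' y1)) :
    (∀ p1 : Y1 → U1 → ℝ, IsChan p1 →
      FbPQ s1 s2 a pY p1opt p2 qY1 qY2 qUU qU2
        ≤ FbPQ s1 s2 a pY p1 p2 qY1 qY2 qUU qU2) ∧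
    (∀ p1 : Y1 → U1 → ℝ, IsChan p1 →
      FbPQ s1 s2 a pY p1 p2 qY1 qY2 qUU qU2
        = FbPQ s1 s2 a pY p1opt p2 qY1 qY2 qUU qU2 →
      p1 = p1opt) := by
  rcases isEmpty_or_nonempty U1 with hU1 | hU1
  · -- degenerate case: `U1` is empty, all the `p1`-dependent terms vanish
    have hFb : ∀ p1 : Y1 → U1 → ℝ, FbPQ s1 s2 a pY p1 p2 qY1 qY2 qUU qU2
        = FbPQ s1 s2 a pY p1opt p2 qY1 qY2 qUU qU2 := by
      intro p1
      unfold FbPQ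
      simp
    refine ⟨fun p1 _ => (hFb p1).ge, fun p1 _ _ => ?_⟩
    funext y1 u1
    exact isEmptyElim u1
  · -- main case
    have hZpos : ∀ y1, 0 < ∑ u1' : U1, Real.exp (mu1 s1 a pY p2 qY1 qY2 qUU u1' y1) :=
      fun y1 => Finset.sum_pos (fun u1 _ => Real.exp_pos _) Finset.univ_nonempty
    have hoptpos : ∀ y1 u1, 0 < p1opt y1 u1 := by
      intro y1 u1
      rw [hp1opt]
      exact div_pos (Real.exp_pos _) (hZpos y1)
    have hoptsum : ∀ y1, ∑ u1, p1opt y1 u1 = 1 := by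
      intro y1
      have h : ∑ u1, p1opt y1 u1
          = (∑ u1, Real.exp (mu1 s1 a pY p2 qY1 qY2 qUU u1 y1))
            / ∑ u1' : U1, Real.exp (mu1 s1 a pY p2 qY1 qY2 qUU u1' y1) := by
        rw [Finset.sum_div]
        exact Finset.sum_congr rfl fun u1 _ => hp1opt y1 u1
      rw [h]
      exact div_self (hZpos y1).ne'
    have hlogopt : ∀ y1 u1, Real.log (p1opt y1 u1)
        = mu1 s1 a pY p2 qY1 qY2 qUU u1 y1
          - Real.log (∑ u1' : U1, Real.exp (mu1 s1 a pY p2 qY1 qY2 qUU u1' y1)) := by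
      intro y1 u1
      rw [hp1opt, Real.log_div (Real.exp_ne_zero _) (hZpos y1).ne', Real.log_exp]
    have hGform : ∀ (p1 : Y1 → U1 → ℝ), (∀ y1, ∑ u1, p1 y1 u1 = 1) → ∀ y1,
        Gfun s1 a pY p2 qY1 qY2 qUU p1 y1
        = ((∑ u1, p1 y1 u1 * Real.log (p1 y1 u1))
          - ∑ u1, p1 y1 u1 * Real.log (p1opt y1 u1))
          - Real.log (∑ u1' : U1, Real.exp (mu1 s1 a pY p2 qY1 qY2 qUU u1' y1)) := by
      intro p1 hsum y1
      have h1 : ∑ u1, p1 y1 u1 * Real.log (p1opt y1 u1)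
          = (∑ u1, p1 y1 u1 * mu1 s1 a pY p2 qY1 qY2 qUU u1 y1)
            - Real.log (∑ u1' : U1, Real.exp (mu1 s1 a pY p2 qY1 qY2 qUU u1' y1)) := by
        have hterm : ∀ u1, p1 y1 u1 * Real.log (p1opt y1 u1)
            = p1 y1 u1 * mu1 s1 a pY p2 qY1 qY2 qUU u1 y1
              - p1 y1 u1 * Real.log (∑ u1' : U1,
                  Real.exp (mu1 s1 a pY p2 qY1 qY2 qUU u1' y1)) := by
          intro u1; rw [hlogopt]; ring
        rw [Finset.sum_congr rfl fun u1 _ => hterm u1, Finset.sum_sub_distrib,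
          ← Finset.sum_mul, hsum y1, one_mul]
      have h2 : Gfun s1 a pY p2 qY1 qY2 qUU p1 y1
          = (∑ u1, p1 y1 u1 * Real.log (p1 y1 u1))
            - ∑ u1, p1 y1 u1 * mu1 s1 a pY p2 qY1 qY2 qUU u1 y1 := by
        unfold Gfun
        simp only [mul_sub]
        rw [Finset.sum_sub_distrib]
      rw [h2, h1]
      ring
    have hGopt : ∀ y1, Gfun s1 a pY p2 qY1 qY2 qUU p1opt y1
        = - Real.log (∑ u1' : U1, Real.exp (mu1 s1 a pY p2 qY1 qY2 qUU u1' y1)) := by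
      intro y1
      rw [hGform p1opt hoptsum y1]
      ring
    have hGge : ∀ (p1 : Y1 → U1 → ℝ), IsChan p1 → ∀ y1,
        Gfun s1 a pY p2 qY1 qY2 qUU p1opt y1 ≤ Gfun s1 a pY p2 qY1 qY2 qUU p1 y1 := by
      intro p1 hp1 y1
      rw [hGform p1 (fun y => (hp1 y).2) y1, hGopt y1]
      have := (gibbs (p1 y1) (p1opt y1) (hp1 y1).1 (hp1 y1).2 (hoptsum y1)
        (fun u1 => hoptpos y1 u1)).1
      linarith
    have hGeq : ∀ (p1 : Y1 → U1 → ℝ), IsChan p1 → ∀ y1,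
        Gfun s1 a pY p2 qY1 qY2 qUU p1 y1 = Gfun s1 a pY p2 qY1 qY2 qUU p1opt y1 →
        p1 y1 = p1opt y1 := by
      intro p1 hp1 y1 heq
      rw [hGform p1 (fun y => (hp1 y).2) y1, hGopt y1] at heq
      exact (gibbs (p1 y1) (p1opt y1) (hp1 y1).1 (hp1 y1).2 (hoptsum y1)
        (fun u1 => hoptpos y1 u1)).2 (by linarith)
    have hdec : ∀ p1 : Y1 → U1 → ℝ,
        FbPQ s1 s2 a pY p1 p2 qY1 qY2 qUU qU2
        = (s2 * (∑ u2, ∑ y2, p2 y2 u2 * bpY2 pY y2 * Real.log (p2 y2 u2))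
           + s1 * (∑ u2, bpU2m pY p2 u2 * Real.log (bpU2m pY p2 u2))
           - s2 * (∑ u2, bpU2m pY p2 u2 * Real.log (qU2 u2)))
          + s1 * ∑ y1, bpY1 pY y1 * Gfun s1 a pY p2 qY1 qY2 qUU p1 y1 := fun p1 =>
      bt_decomp' pY s1 s2 a hs1.ne' qY1 qY2 qUU qU2 p2 p1 (fun y1 => (hY1pos y1).ne')
    have hdiff : ∀ p1 : Y1 → U1 → ℝ,
        FbPQ s1 s2 a pY p1 p2 qY1 qY2 qUU qU2
          - FbPQ s1 s2 a pY p1opt p2 qY1 qY2 qUU qU2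
        = s1 * ∑ y1, bpY1 pY y1 * (Gfun s1 a pY p2 qY1 qY2 qUU p1 y1
            - Gfun s1 a pY p2 qY1 qY2 qUU p1opt y1) := by
      intro p1
      have hs : ∑ y1, bpY1 pY y1 * (Gfun s1 a pY p2 qY1 qY2 qUU p1 y1
            - Gfun s1 a pY p2 qY1 qY2 qUU p1opt y1)
          = (∑ y1, bpY1 pY y1 * Gfun s1 a pY p2 qY1 qY2 qUU p1 y1)
            - ∑ y1, bpY1 pY y1 * Gfun s1 a pY p2 qY1 qY2 qUU p1opt y1 := by
        rw [← Finset.sum_sub_distrib]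
        exact Finset.sum_congr rfl fun y1 _ => by ring
      rw [hdec p1, hdec p1opt, hs]
      ring
    constructor
    · intro p1 hp1
      have hnn : 0 ≤ ∑ y1, bpY1 pY y1 * (Gfun s1 a pY p2 qY1 qY2 qUU p1 y1
          - Gfun s1 a pY p2 qY1 qY2 qUU p1opt y1) :=
        Finset.sum_nonneg fun y1 _ =>
          mul_nonneg (hY1pos y1).le (by linarith [hGge p1 hp1 y1])
      have := mul_nonneg hs1.le hnn
      linarith [hdiff p1]
    · intro p1 hp1 heq
      have hz : ∑ y1, bpY1 pY y1 * (Gfun s1 a pY p2 qY1 qY2 qUU p1 y1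
          - Gfun s1 a pY p2 qY1 qY2 qUU p1opt y1) = 0 := by
        have h := hdiff p1
        rw [heq, sub_self] at h
        rcases mul_eq_zero.mp h.symm with h' | h'
        · exact absurd h' hs1.ne'
        · exact h'
      have hall := (Finset.sum_eq_zero_iff_of_nonneg
        (fun y1 _ => mul_nonneg (hY1pos y1).le (by linarith [hGge p1 hp1 y1]))).mp hz
      funext y1
      have h0 : bpY1 pY y1 * (Gfun s1 a pY p2 qY1 qY2 qUU p1 y1
          - Gfun s1 a pY p2 qY1 qY2 qUU p1opt y1) = 0 := hall y1 (Finset.mem_univ y1)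
      have hd : Gfun s1 a pY p2 qY1 qY2 qUU p1 y1
          - Gfun s1 a pY p2 qY1 qY2 qUU p1opt y1 = 0 := by
        rcases mul_eq_zero.mp h0 with h' | h'
        · exact absurd h' (hY1pos y1).ne'
        · exact h'
      exact hGeq p1 hp1 y1 (by linarith)
end
end
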